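/- Let μ be a Radon measure on ℝ^d satisfying the growth condition, 1 < η ≤ α < ∞, β > α^d. If f ∈ rbmo(μ) (Yang's local RBMO space), then f ∈ RBMO(μ) (Tolsa's space) and ‖f‖_{RBMO(μ)} ≤ C ‖f‖_{rbmo(μ)}. -/

import Mathlib

open MeasureTheory ENNReal

structure Cube (d : ℕ) where
  center : Fin d → ℝ
  side : ℝ

namespace Cube

/-- The closed axis-parallel cube with the given center and side length. -/
def toSet {d : ℕ} (Q : Cube d) : Set (Fin d → ℝ) :=
  {y | ∀ i, |y i - Q.center i| ≤ Q.side / 2}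

/-- The concentric dilate `ηQ`. -/
def dilate {d : ℕ} (η : ℝ) (Q : Cube d) : Cube d :=
  ⟨Q.center, η * Q.side⟩

end Cube

/-- The growth condition `μ(Q(x,l)) ≤ C₀ l^n`. -/
def GrowthCondition {d : ℕ} (μ : Measure (Fin d → ℝ)) (C₀ n : ℝ) : Prop :=
  ∀ (x : Fin d → ℝ) (l : ℝ), 0 < l →
    μ (Cube.toSet ⟨x, l⟩) ≤ ENNReal.ofReal (C₀ * l ^ n)

/-- A cube `Q` is `(α,β)`-doubling if `μ(αQ) ≤ β μ(Q)`. -/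
def IsDoubling {d : ℕ} (μ : Measure (Fin d → ℝ)) (α β : ℝ) (Q : Cube d) : Prop :=
  μ (Q.dilate α).toSet ≤ ENNReal.ofReal β * μ Q.toSet

/-- `N_{Q,R}`: the first positive integer `k` with `l(2^k Q) ≥ l(R)`. -/
noncomputable def NQR {d : ℕ} (Q R : Cube d) : ℕ :=
  sInf {k : ℕ | 0 < k ∧ R.side ≤ 2 ^ k * Q.side}

/-- The coefficient `K_{Q,R} = 1 + ∑_{k=1}^{N_{Q,R}} μ(2^k Q)/l(2^k Q)^n`. -/
noncomputable def Kcoef {d : ℕ} (μ : Measure (Fin d → ℝ)) (n : ℝ) (Q R : Cube d) : ℝ :=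
  1 + ∑ k ∈ Finset.Icc 1 (NQR Q R),
    (μ ((Q.dilate (2 ^ k)).toSet)).toReal / ((2 ^ k * Q.side) ^ n)

/-- The μ-average `m_Q f` of `f` over a cube `Q`. -/
noncomputable def cubeAvg {d : ℕ} (μ : Measure (Fin d → ℝ))
    (f : (Fin d → ℝ) → ℝ) (Q : Cube d) : ℝ :=
  (∫ x in Q.toSet, f x ∂μ) / (μ Q.toSet).toReal

/-- The exponent of the smallest expansive concentric `(α,β)`-doubling cube. -/
noncomputable def expIdx {d : ℕ} (μ : Measure (Fin d → ℝ)) (α β : ℝ) (Q : Cube d) : ℕ :=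
  sInf {m : ℕ | IsDoubling μ α β (Q.dilate (α ^ m))}

/-- `Q̃`, the smallest expansive concentric `(α,β)`-doubling cube of `Q`. -/
noncomputable def tilde {d : ℕ} (μ : Measure (Fin d → ℝ)) (α β : ℝ) (Q : Cube d) : Cube d :=
  Q.dilate (α ^ expIdx μ α β Q)

/-- The exponent of the biggest contractive concentric `(α,β)`-doubling cube. -/
noncomputable def conIdx {d : ℕ} (μ : Measure (Fin d → ℝ)) (α β : ℝ) (Q : Cube d) : ℕ :=
  sInf {N : ℕ | IsDoubling μ α β (Q.dilate (α ^ (-(N : ℤ))))}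

/-- `Q'`, the biggest contractive concentric `(α,β)`-doubling cube of `Q`. -/
noncomputable def prim {d : ℕ} (μ : Measure (Fin d → ℝ)) (α β : ℝ) (Q : Cube d) : Cube d :=
  Q.dilate (α ^ (-(conIdx μ α β Q : ℤ)))
/-- The defining conditions of Tolsa's `RBMO(μ)` with constant `C`. -/
def RBMOBound {d : ℕ} (μ : Measure (Fin d → ℝ)) (n α β η : ℝ)
    (f : (Fin d → ℝ) → ℝ) (C : ℝ) : Prop :=
  (∀ Q : Cube d, 0 < Q.side →
    ∫ x in Q.toSet, |f x - cubeAvg μ f (tilde μ α β Q)| ∂μ ≤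
      C * (μ (Q.dilate η).toSet).toReal) ∧
  (∀ Q R : Cube d, 0 < Q.side → Q.toSet ⊆ R.toSet →
    IsDoubling μ α β Q → IsDoubling μ α β R →
    |cubeAvg μ f Q - cubeAvg μ f R| ≤ C * Kcoef μ n Q R)

/-- The defining conditions of Yang's local space `rbmo(μ)` with constant `C`. -/
def RbmoBound {d : ℕ} (μ : Measure (Fin d → ℝ)) (n α β η : ℝ)
    (f : (Fin d → ℝ) → ℝ) (C : ℝ) : Prop :=
  (∀ Q : Cube d, 0 < Q.side → Q.side ≤ 1 →
    ∫ x in Q.toSet, |f x - cubeAvg μ f (tilde μ α β Q)| ∂μ ≤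
      C * (μ (Q.dilate η).toSet).toReal) ∧
  (∀ Q R : Cube d, 0 < Q.side → Q.side ≤ 1 → Q.toSet ⊆ R.toSet →
    IsDoubling μ α β Q → IsDoubling μ α β R →
    |cubeAvg μ f Q - cubeAvg μ f R| ≤ C * Kcoef μ n Q R) ∧
  (∀ Q : Cube d, 1 < Q.side →
    ∫ x in Q.toSet, |f x| ∂μ ≤ C * (μ (Q.dilate η).toSet).toReal)

/-! Cubes of side at most 1 are covered by the conditions of `rbmo(μ)` directly. Every doubling
cube `P` of side greater than 1 has `|m_P f| ≤ β C₂`, because `μ(ηP) ≤ μ(αP) ≤ β μ(P)` and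
`∫_P |f| ≤ C₂ μ(ηP)`. This bounds oscillations over large cubes `Q` (where `l(Q̃) ≥ l(Q) > 1`)
by `(β + 1) C₂ μ(ηQ)`, and differences of means of large doubling cubes `Q ⊆ R` by
`2 β C₂ ≤ 2 β C₂ K_{Q,R}`. The cube `Q̃` exists: were no `α^m Q` doubling, `μ(α^m Q)` would grow
like `β^m`, faster than the bound `C₀ (α^m l(Q))^n` allows, as `α^n ≤ α^d < β`. -/

namespace Cube

variable {d : ℕ}

theorem toSet_eq_Icc (Q : Cube d) :
    Q.toSet = Set.Icc (fun i => Q.center i - Q.side / 2) (fun i => Q.center i + Q.side / 2) := by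
  ext y
  simp only [toSet, Set.mem_ofPred_eq, Set.mem_Icc, Pi.le_def, abs_le, ← forall_and]
  exact forall_congr' fun i => by constructor <;> rintro ⟨h₁, h₂⟩ <;> constructor <;> linarith

theorem isCompact_toSet (Q : Cube d) : IsCompact Q.toSet := by
  rw [toSet_eq_Icc]
  exact isCompact_Icc

theorem measure_toSet_ne_top (μ : Measure (Fin d → ℝ)) [IsLocallyFiniteMeasure μ] (Q : Cube d) :
    μ Q.toSet ≠ ⊤ :=
  Q.isCompact_toSet.measure_lt_top.ne

theorem dilate_dilate (Q : Cube d) (a b : ℝ) : (Q.dilate a).dilate b = Q.dilate (b * a) := by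
  simp only [dilate, mul_assoc]

theorem toSet_dilate_mono {Q : Cube d} (hQ : 0 ≤ Q.side) {a b : ℝ} (hab : a ≤ b) :
    (Q.dilate a).toSet ⊆ (Q.dilate b).toSet := fun _ hy i =>
  (hy i).trans (by simp only [dilate]; gcongr)

theorem toSet_subset_dilate {Q : Cube d} (hQ : 0 ≤ Q.side) {a : ℝ} (ha : 1 ≤ a) :
    Q.toSet ⊆ (Q.dilate a).toSet := fun _ hy i =>
  (hy i).trans (by simp only [dilate]; nlinarith)

theorem side_le_side_of_toSet_subset (hd : 0 < d) {Q R : Cube d} (hQ : 0 ≤ Q.side)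
    (h : Q.toSet ⊆ R.toSet) : Q.side ≤ R.side := by
  rw [toSet_eq_Icc, toSet_eq_Icc, Set.Icc_subset_Icc_iff fun _ => by linarith] at h
  have h₁ := h.1 ⟨0, hd⟩
  have h₂ := h.2 ⟨0, hd⟩
  simp only at h₁ h₂
  linarith

theorem toSet_eq_univ (Q : Cube 0) : Q.toSet = Set.univ :=
  Set.eq_univ_of_forall fun _ i => i.elim0

end Cube

theorem one_le_Kcoef {d : ℕ} (μ : Measure (Fin d → ℝ)) (n : ℝ) {Q : Cube d} (R : Cube d)
    (hQ : 0 ≤ Q.side) : 1 ≤ Kcoef μ n Q R :=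
  le_add_of_nonneg_right <| Finset.sum_nonneg fun _ _ => by positivity

theorem setIntegral_abs_sub_const_le {X : Type*} [MeasurableSpace X] {μ : Measure X}
    {f : X → ℝ} {s : Set X} (hf : IntegrableOn f s μ) (hs : μ s ≠ ⊤) (c : ℝ) :
    ∫ x in s, |f x - c| ∂μ ≤ ∫ x in s, |f x| ∂μ + |c| * (μ s).toReal := by
  have hc : IntegrableOn (fun _ => c) s μ := integrableOn_const hs
  calc ∫ x in s, |f x - c| ∂μ ≤ ∫ x in s, (|f x| + |c|) ∂μ :=
        integral_mono (hf.sub hc).abs (hf.abs.add hc.abs) fun x => abs_sub (f x) c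
    _ = ∫ x in s, |f x| ∂μ + |c| * (μ s).toReal := by
        rw [integral_add hf.abs hc.abs, setIntegral_const, smul_eq_mul, mul_comm, Measure.real]

theorem exists_succ_le_mul_of_le_mul_pow {g : ℕ → ℝ} {A r β : ℝ} (hg : 0 ≤ g 0) (hr : 0 < r)
    (hrβ : r < β) (hbound : ∀ m, g m ≤ A * r ^ m) : ∃ m, g (m + 1) ≤ β * g m := by
  by_contra! hgrow
  have hg₁ : 0 < g 1 := (mul_nonneg (hr.trans hrβ).le hg).trans_lt (hgrow 0)
  have hlower : ∀ m : ℕ, β ^ m * g 1 ≤ g (m + 1) := by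
    intro m
    induction m with
    | zero => simp
    | succ k ih =>
      calc β ^ (k + 1) * g 1 = β * (β ^ k * g 1) := by ring
        _ ≤ β * g (k + 1) := by gcongr; exact (hr.trans hrβ).le
        _ ≤ g (k + 2) := (hgrow (k + 1)).le
  obtain ⟨m, hm⟩ := pow_unbounded_of_one_lt (A * r / g 1) ((one_lt_div hr).2 hrβ)
  rw [div_pow, div_lt_div_iff₀ hg₁ (pow_pos hr m)] at hm
  have := (hlower m).trans (hbound (m + 1))
  rw [pow_succ] at this
  linarith

section Doubling

variable {d : ℕ} {μ : Measure (Fin d → ℝ)} {α β : ℝ} {Q : Cube d}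

theorem isDoubling_iff_toReal_le [IsLocallyFiniteMeasure μ] (hβ : 0 ≤ β) :
    IsDoubling μ α β Q ↔ (μ (Q.dilate α).toSet).toReal ≤ β * (μ Q.toSet).toReal := by
  rw [IsDoubling, ← ENNReal.ofReal_toReal (Q.measure_toSet_ne_top μ), ← ENNReal.ofReal_mul hβ,
    ENNReal.le_ofReal_iff_toReal_le ((Q.dilate α).measure_toSet_ne_top μ) (by positivity),
    ENNReal.toReal_ofReal ENNReal.toReal_nonneg]

theorem IsDoubling.toReal_measure_dilate_le [IsLocallyFiniteMeasure μ] (h : IsDoubling μ α β Q)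
    (hQ : 0 ≤ Q.side) (hβ : 0 ≤ β) {η : ℝ} (hηα : η ≤ α) :
    (μ (Q.dilate η).toSet).toReal ≤ β * (μ Q.toSet).toReal :=
  (ENNReal.toReal_mono ((Q.dilate α).measure_toSet_ne_top μ)
    (measure_mono (Q.toSet_dilate_mono hQ hηα))).trans ((isDoubling_iff_toReal_le hβ).1 h)

theorem abs_cubeAvg_le_of_isDoubling [IsLocallyFiniteMeasure μ] (f : (Fin d → ℝ) → ℝ)
    {η C : ℝ} (h : IsDoubling μ α β Q) (hQ : 0 ≤ Q.side) (hβ : 0 ≤ β) (hC : 0 ≤ C) (hηα : η ≤ α)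
    (hint : ∫ x in Q.toSet, |f x| ∂μ ≤ C * (μ (Q.dilate η).toSet).toReal) :
    |cubeAvg μ f Q| ≤ C * β := by
  rw [cubeAvg, abs_div, ENNReal.abs_toReal]
  rcases ENNReal.toReal_nonneg.eq_or_lt with hμ | hμ
  · rw [← hμ, _root_.div_zero]
    positivity
  rw [div_le_iff₀ hμ]
  calc |∫ x in Q.toSet, f x ∂μ| ≤ ∫ x in Q.toSet, |f x| ∂μ := abs_integral_le_integral_abs
    _ ≤ C * (μ (Q.dilate η).toSet).toReal := hint
    _ ≤ C * (β * (μ Q.toSet).toReal) := by gcongr; exact h.toReal_measure_dilate_le hQ hβ hηα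
    _ = C * β * (μ Q.toSet).toReal := by ring

theorem GrowthCondition.toReal_measure_dilate_le {C₀ n : ℝ} (h : GrowthCondition μ C₀ n)
    (hC₀ : 0 ≤ C₀) (hQ : 0 < Q.side) {t : ℝ} (ht : 0 < t) :
    (μ (Q.dilate t).toSet).toReal ≤ C₀ * Q.side ^ n * t ^ n :=
  ENNReal.toReal_le_of_le_ofReal (by positivity) <|
    (h Q.center (t * Q.side) (by positivity)).trans_eq <| by
      rw [Real.mul_rpow ht.le hQ.le, mul_comm (t ^ n), mul_assoc]

theorem exists_isDoubling_dilate_pow [IsLocallyFiniteMeasure μ] {C₀ n : ℝ}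
    (hgrowth : GrowthCondition μ C₀ n) (hC₀ : 0 ≤ C₀) (hα : 0 < α) (hαβ : α ^ n < β)
    (hQ : 0 < Q.side) :
    ∃ m : ℕ, IsDoubling μ α β (Q.dilate (α ^ m)) := by
  have hαn : 0 < α ^ n := Real.rpow_pos_of_pos hα n
  obtain ⟨m, hm⟩ := exists_succ_le_mul_of_le_mul_pow
    (g := fun m => (μ (Q.dilate (α ^ m)).toSet).toReal) ENNReal.toReal_nonneg hαn hαβ
    fun m => (hgrowth.toReal_measure_dilate_le hC₀ hQ (pow_pos hα m)).trans_eq <| by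
      rw [Real.rpow_pow_comm hα.le]
  refine ⟨m, (isDoubling_iff_toReal_le (hαn.trans hαβ).le).2 ?_⟩
  rwa [Cube.dilate_dilate, ← pow_succ']

theorem isDoubling_tilde (h : ∃ m : ℕ, IsDoubling μ α β (Q.dilate (α ^ m))) :
    IsDoubling μ α β (tilde μ α β Q) :=
  Nat.sInf_mem h

theorem side_le_side_tilde (hα : 1 ≤ α) (hQ : 0 ≤ Q.side) : Q.side ≤ (tilde μ α β Q).side :=
  le_mul_of_one_le_left hQ (one_le_pow₀ hα)

end Doubling

section LargeCubes

variable {d : ℕ} {μ : Measure (Fin d → ℝ)} [IsLocallyFiniteMeasure μ] {α β η C : ℝ}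
  {f : (Fin d → ℝ) → ℝ}

theorem integral_abs_sub_cubeAvg_tilde_le (hf : LocallyIntegrable f μ)
    (hlarge : ∀ Q : Cube d, 1 < Q.side →
      ∫ x in Q.toSet, |f x| ∂μ ≤ C * (μ (Q.dilate η).toSet).toReal)
    (hC : 0 ≤ C) (hβ : 0 ≤ β) (hη : 1 ≤ η) (hηα : η ≤ α) {Q : Cube d} (hQ : 1 < Q.side)
    (hdoub : IsDoubling μ α β (tilde μ α β Q)) :
    ∫ x in Q.toSet, |f x - cubeAvg μ f (tilde μ α β Q)| ∂μ ≤
      (β + 1) * C * (μ (Q.dilate η).toSet).toReal := by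
  have hQ₀ : 0 ≤ Q.side := by linarith
  have hQt : 1 < (tilde μ α β Q).side := hQ.trans_le (side_le_side_tilde (hη.trans hηα) hQ₀)
  have havg := abs_cubeAvg_le_of_isDoubling f hdoub (by linarith) hβ hC hηα (hlarge _ hQt)
  have hμ : (μ Q.toSet).toReal ≤ (μ (Q.dilate η).toSet).toReal :=
    ENNReal.toReal_mono ((Q.dilate η).measure_toSet_ne_top μ)
      (measure_mono (Q.toSet_subset_dilate hQ₀ hη))
  calc ∫ x in Q.toSet, |f x - cubeAvg μ f (tilde μ α β Q)| ∂μ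
      ≤ ∫ x in Q.toSet, |f x| ∂μ + |cubeAvg μ f (tilde μ α β Q)| * (μ Q.toSet).toReal :=
        setIntegral_abs_sub_const_le (hf.integrableOn_isCompact Q.isCompact_toSet)
          (Q.measure_toSet_ne_top μ) _
    _ ≤ C * (μ (Q.dilate η).toSet).toReal + C * β * (μ (Q.dilate η).toSet).toReal := by
        gcongr
        exact hlarge Q hQ
    _ = (β + 1) * C * (μ (Q.dilate η).toSet).toReal := by ring

theorem abs_cubeAvg_sub_cubeAvg_le
    (hlarge : ∀ Q : Cube d, 1 < Q.side →
      ∫ x in Q.toSet, |f x| ∂μ ≤ C * (μ (Q.dilate η).toSet).toReal)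
    (hC : 0 ≤ C) (hβ : 0 ≤ β) (hηα : η ≤ α) {Q R : Cube d} (hQ : 1 < Q.side)
    (hQR : Q.toSet ⊆ R.toSet) (hdQ : IsDoubling μ α β Q) (hdR : IsDoubling μ α β R) :
    |cubeAvg μ f Q - cubeAvg μ f R| ≤ 2 * β * C := by
  rcases Nat.eq_zero_or_pos d with rfl | hd
  · rw [cubeAvg, cubeAvg, Q.toSet_eq_univ, R.toSet_eq_univ, sub_self, abs_zero]
    positivity
  have hR : 1 < R.side := hQ.trans_le (Cube.side_le_side_of_toSet_subset hd (by linarith) hQR)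
  calc |cubeAvg μ f Q - cubeAvg μ f R| ≤ |cubeAvg μ f Q| + |cubeAvg μ f R| := abs_sub _ _
    _ ≤ C * β + C * β :=
        add_le_add (abs_cubeAvg_le_of_isDoubling f hdQ (by linarith) hβ hC hηα (hlarge Q hQ))
          (abs_cubeAvg_le_of_isDoubling f hdR (by linarith) hβ hC hηα (hlarge R hR))
    _ = 2 * β * C := by ring

end LargeCubes

theorem stmt14_general {d : ℕ} (μ : Measure (Fin d → ℝ)) [IsLocallyFiniteMeasure μ]
    (C₀ n α β η : ℝ)
    (hC₀ : 0 < C₀) (hnd : n ≤ d) (hgrowth : GrowthCondition μ C₀ n)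
    (hη : 1 < η) (hηα : η ≤ α) (hβ : α ^ d < β) :
    ∃ C : ℝ, 0 < C ∧ ∀ (f : (Fin d → ℝ) → ℝ) (C₂ : ℝ), 0 ≤ C₂ →
      LocallyIntegrable f μ → RbmoBound μ n α β η f C₂ →
      RBMOBound μ n α β η f (C * C₂) := by
  have hα : 1 < α := hη.trans_le hηα
  have hαβ : α ^ n < β :=
    (Real.rpow_le_rpow_of_exponent_le hα.le hnd).trans_lt (by rwa [Real.rpow_natCast])
  have hβ₀ : 0 ≤ β := ((Real.rpow_pos_of_pos (by linarith) n).trans hαβ).le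
  refine ⟨2 * (β + 1), by positivity, fun f C₂ hC₂ hf ⟨hosc, hmean, hlarge⟩ =>
    ⟨fun Q hQ => ?_, fun Q R hQ hQR hdQ hdR => ?_⟩⟩
  · have hμ : 0 ≤ (μ (Q.dilate η).toSet).toReal := ENNReal.toReal_nonneg
    have hβC₂μ := mul_nonneg (mul_nonneg hβ₀ hC₂) hμ
    rcases le_or_gt Q.side 1 with hQ1 | hQ1
    · exact (hosc Q hQ hQ1).trans (by linarith [mul_nonneg hC₂ hμ])
    · have hdoub := isDoubling_tilde <|
        exists_isDoubling_dilate_pow hgrowth hC₀.le (by linarith) hαβ hQ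
      exact (integral_abs_sub_cubeAvg_tilde_le hf hlarge hC₂ hβ₀ hη.le hηα hQ1 hdoub).trans
        (by linarith [mul_nonneg hC₂ hμ])
  · have hK := one_le_Kcoef μ n R hQ.le
    have hC₂K := mul_nonneg hC₂ (zero_le_one.trans hK)
    rcases le_or_gt Q.side 1 with hQ1 | hQ1
    · exact (hmean Q R hQ hQ1 hQR hdQ hdR).trans
        (by linarith [mul_nonneg (mul_nonneg hβ₀ hC₂) (zero_le_one.trans hK)])
    · exact (abs_cubeAvg_sub_cubeAvg_le hlarge hC₂ hβ₀ hηα hQ1 hQR hdQ hdR).trans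
        (by linarith [mul_nonneg (mul_nonneg hβ₀ hC₂) (sub_nonneg.2 hK)])

theorem stmt14 {d : ℕ} (μ : Measure (Fin d → ℝ)) [IsLocallyFiniteMeasure μ]
    (C₀ n α β η : ℝ)
    (hC₀ : 0 < C₀) (hn : 0 < n) (hnd : n ≤ d) (hgrowth : GrowthCondition μ C₀ n)
    (hη : 1 < η) (hηα : η ≤ α) (hβ : α ^ d < β) :
    ∃ C : ℝ, 0 < C ∧ ∀ (f : (Fin d → ℝ) → ℝ) (C₂ : ℝ), 0 ≤ C₂ →
      LocallyIntegrable f μ → RbmoBound μ n α β η f C₂ →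
      RBMOBound μ n α β η f (C * C₂) :=
  stmt14_general μ C₀ n α β η hC₀ hnd hgrowth hη hηα hβ
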